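/- arXiv:0705.4658 — 4 statements merged into one kernel-verified Lean document; each statement's English description precedes it below -/
import Mathlib

section
/- Let n, m, k be natural numbers with k ≤ n, let p ≥ 0 be a real number, and let f : {0,1}^n × {0,1}^n → {0,1}^m. Suppose that for every pair of sets B1, B2 ⊆ {0,1}^n with |B1| = |B2| = 2^k and every a ∈ {0,1}^m one has |{(u,v) ∈ B1 × B2 : f(u,v) = a}| ≤ p · 2^k · 2^k. Then for all natural numbers k1, k2 with k ≤ k1 ≤ n and k ≤ k2 ≤ n, every B1' ⊆ {0,1}^n with |B1'| = 2^{k1}, every B2' ⊆ {0,1}^n with |B2'| = 2^{k2}, and every a ∈ {0,1}^m, one has |{(u,v) ∈ B1' × B2' : f(u,v) = a}| ≤ p · 2^{k1} · 2^{k2}. -/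
/-!
Fix the value `a` and count the pairs of `B₁ × B₂` that `f` sends to `a`. This count is
subadditive in each factor, and a set of size `2^(j+1)` is the disjoint union of two sets of
size `2^j`. So by induction on the exponent, a bound `count ≤ c · |B|` on all sets `B` of
size `2^k` propagates to all sets of size `2^j` with `j ≥ k`; doing this first in `B₁` and then
in `B₂` gives the claim.
-/

open Finset

theorem Finset.exists_subset_card_eq_card_sdiff_eq_of_card_eq_two_mul {α : Type*}
    [DecidableEq α] {s : Finset α} {m : ℕ} (hs : #s = 2 * m) :
    ∃ t ⊆ s, #t = m ∧ #(s \ t) = m := by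
  obtain ⟨t, hts, ht⟩ := exists_subset_card_eq (s := s) (n := m) (by omega)
  exact ⟨t, hts, ht, by rw [card_sdiff_of_subset hts, hs, ht]; omega⟩

theorem Finset.le_mul_card_of_subadditive_of_card_eq_two_pow {α : Type*} [DecidableEq α]
    {g : Finset α → ℝ} (hg : ∀ s t, Disjoint s t → g (s ∪ t) ≤ g s + g t) {c : ℝ} {k : ℕ}
    (hk : ∀ s, #s = 2 ^ k → g s ≤ c * #s) {j : ℕ} (hkj : k ≤ j) :
    ∀ s, #s = 2 ^ j → g s ≤ c * #s := by
  induction j, hkj using Nat.le_induction with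
  | base => exact hk
  | succ j _ ih =>
    intro s hs
    obtain ⟨t, hts, ht, hst⟩ := exists_subset_card_eq_card_sdiff_eq_of_card_eq_two_mul (hs.trans (pow_succ' 2 j))
    calc g s = g (t ∪ s \ t) := by rw [union_sdiff_of_subset hts]
      _ ≤ g t + g (s \ t) := hg _ _ disjoint_sdiff
      _ ≤ c * #t + c * #(s \ t) := add_le_add (ih t ht) (ih _ hst)
      _ = c * #s := by rw [hs, ht, hst]; push_cast; ring

section ProductCount

variable {α β : Type*} [DecidableEq α] [DecidableEq β] (P : α × β → Prop) [DecidablePred P]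

theorem Finset.card_filter_union_product_le (s t : Finset α) (u : Finset β) :
    #{x ∈ (s ∪ t) ×ˢ u | P x} ≤ #{x ∈ s ×ˢ u | P x} + #{x ∈ t ×ˢ u | P x} := by
  rw [union_product, filter_union]
  exact card_union_le _ _

theorem Finset.card_filter_product_union_le (s : Finset α) (t u : Finset β) :
    #{x ∈ s ×ˢ (t ∪ u) | P x} ≤ #{x ∈ s ×ˢ t | P x} + #{x ∈ s ×ˢ u | P x} := by
  rw [product_union, filter_union]
  exact card_union_le _ _

end ProductCount

theorem weak_regularity_implies_regularity_general
    (n m k : ℕ) (p : ℝ)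
    (f : (Fin n → Bool) × (Fin n → Bool) → (Fin m → Bool))
    (h : ∀ B1 B2 : Finset (Fin n → Bool), B1.card = 2 ^ k → B2.card = 2 ^ k →
      ∀ a : Fin m → Bool,
        (((B1 ×ˢ B2).filter (fun uv => f uv = a)).card : ℝ) ≤ p * 2 ^ k * 2 ^ k) :
    ∀ k1 k2 : ℕ, k ≤ k1 → k1 ≤ n → k ≤ k2 → k2 ≤ n →
      ∀ B1' B2' : Finset (Fin n → Bool), B1'.card = 2 ^ k1 → B2'.card = 2 ^ k2 →
        ∀ a : Fin m → Bool,
          (((B1' ×ˢ B2').filter (fun uv => f uv = a)).card : ℝ) ≤ p * 2 ^ k1 * 2 ^ k2 := by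
  intro k1 k2 hk1 _ hk2 _ B1' B2' h1 h2 a
  have first_factor : ∀ B2, #B2 = 2 ^ k → ∀ B1, #B1 = 2 ^ k1 →
      (#{uv ∈ B1 ×ˢ B2 | f uv = a} : ℝ) ≤ p * 2 ^ k * #B1 := by
    intro B2 hB2
    refine le_mul_card_of_subadditive_of_card_eq_two_pow
      (fun s t _ => by exact_mod_cast card_filter_union_product_le _ s t B2) (fun B1 hB1 => ?_) hk1
    simpa [hB1, mul_right_comm] using h B1 B2 hB1 hB2 a
  have second_factor := le_mul_card_of_subadditive_of_card_eq_two_pow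
    (g := fun B2 => (#{uv ∈ B1' ×ˢ B2 | f uv = a} : ℝ)) (c := p * 2 ^ k1)
    (fun s t _ => by exact_mod_cast card_filter_product_union_le _ B1' s t)
    (fun B2 hB2 => by simpa [h1, hB2, mul_right_comm] using first_factor B2 hB2 B1' h1) hk2 B2' h2
  simpa [h2] using second_factor

/-- If a function `f : {0,1}^n × {0,1}^n → {0,1}^m` maps at most `p·2^k·2^k` pairs of every
rectangle `B1 × B2` with `|B1| = |B2| = 2^k` to any given value `a`, then the same bound
(with `p·2^{k1}·2^{k2}`) holds for all rectangles with `|B1'| = 2^{k1}`, `|B2'| = 2^{k2}`,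
`k ≤ k1 ≤ n`, `k ≤ k2 ≤ n`. -/
theorem weak_regularity_implies_regularity
    (n m k : ℕ) (hk : k ≤ n) (p : ℝ) (hp : 0 ≤ p)
    (f : (Fin n → Bool) × (Fin n → Bool) → (Fin m → Bool))
    (h : ∀ B1 B2 : Finset (Fin n → Bool), B1.card = 2 ^ k → B2.card = 2 ^ k →
      ∀ a : Fin m → Bool,
        (((B1 ×ˢ B2).filter (fun uv => f uv = a)).card : ℝ) ≤ p * 2 ^ k * 2 ^ k) :
    ∀ k1 k2 : ℕ, k ≤ k1 → k1 ≤ n → k ≤ k2 → k2 ≤ n →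
      ∀ B1' B2' : Finset (Fin n → Bool), B1'.card = 2 ^ k1 → B2'.card = 2 ^ k2 →
        ∀ a : Fin m → Bool,
          (((B1' ×ˢ B2').filter (fun uv => f uv = a)).card : ℝ) ≤ p * 2 ^ k1 * 2 ^ k2 :=
  weak_regularity_implies_regularity_general n m k p f h
end

section
/- For every real σ with 0 < σ < 1 there exists a natural number n0 such that for every n ≥ n0 and every natural number m with m ≤ 0.99 · σ · n, there exists a function f : {0,1}^n × {0,1}^n → {0,1}^m with the following property: setting K = 2^{⌈σn⌉}, for every pair of sets B1, B2 ⊆ {0,1}^n with |B1| = |B2| = K and every a ∈ {0,1}^m, one has 2^m · |{(u,v) ∈ B1 × B2 : f(u,v) = a}| ≤ 2 · K · K. -/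
open Finset

lemma sum_two_pow_count {P A : Type*} [Fintype P] [DecidableEq P] [Fintype A] [DecidableEq A]
    (S : Finset P) (a : A) :
    ∑ f : P → A, 2 ^ (S.filter (fun p => f p = a)).card
      = (Fintype.card A + 1) ^ S.card * (Fintype.card A) ^ (Fintype.card P - S.card) := by
  have key : ∀ f : P → A, (2:ℕ) ^ (S.filter (fun p => f p = a)).card
      = ∏ p : P, (if p ∈ S ∧ f p = a then 2 else 1) := by
    intro f
    rw [Finset.prod_ite, Finset.prod_const, Finset.prod_const, one_pow, mul_one]
    congr 2
    ext p
    simp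
  simp_rw [key]
  rw [← Fintype.prod_sum (κ := fun _ : P => A) (fun p b => if p ∈ S ∧ b = a then (2:ℕ) else 1)]
  have hsum : ∀ p : P, (∑ b : A, if p ∈ S ∧ b = a then (2:ℕ) else 1)
      = if p ∈ S then Fintype.card A + 1 else Fintype.card A := by
    intro p
    by_cases hp : p ∈ S
    · simp only [hp, true_and, if_true]
      have h2 : ∀ b : A, (if b = a then (2:ℕ) else 1) = 1 + (if b = a then 1 else 0) := by
        intro b; split <;> rfl
      simp_rw [h2, Finset.sum_add_distrib, Finset.sum_const, Finset.sum_ite_eq' univ a (fun _ => 1)]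
      simp [Finset.card_univ]
    · simp [hp, Finset.card_univ]
  simp_rw [hsum]
  rw [Finset.prod_ite, Finset.prod_const, Finset.prod_const]
  have h1 : univ.filter (fun p => p ∈ S) = S := by ext p; simp
  have h2 : (univ.filter (fun p => ¬ p ∈ S)) = Sᶜ := by ext p; simp
  rw [h1, h2, Finset.card_compl]

lemma card_filter_le_bound {P A : Type*} [Fintype P] [DecidableEq P] [Fintype A] [DecidableEq A]
    (S : Finset P) (a : A) (t : ℕ) :
    (univ.filter (fun f : P → A => t ≤ (S.filter (fun p => f p = a)).card)).card * 2 ^ t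
      ≤ (Fintype.card A + 1) ^ S.card * (Fintype.card A) ^ (Fintype.card P - S.card) := by
  rw [← sum_two_pow_count S a]
  calc (univ.filter (fun f : P → A => t ≤ (S.filter (fun p => f p = a)).card)).card * 2 ^ t
      = ∑ _f ∈ univ.filter (fun f : P → A => t ≤ (S.filter (fun p => f p = a)).card), 2 ^ t := by
        rw [Finset.sum_const, smul_eq_mul]
    _ ≤ ∑ f ∈ univ.filter (fun f : P → A => t ≤ (S.filter (fun p => f p = a)).card),
          2 ^ (S.filter (fun p => f p = a)).card :=
        Finset.sum_le_sum (fun f hf => Nat.pow_le_pow_right (by norm_num) (Finset.mem_filter.mp hf).2)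
    _ ≤ ∑ f : P → A, 2 ^ (S.filter (fun p => f p = a)).card :=
        Finset.sum_le_sum_of_subset (Finset.filter_subset _ _)

lemma quad_le_exp {t : ℝ} (ht : 0 ≤ t) : (t/2)^2 ≤ Real.exp t := by
  have h1 : Real.exp t = (Real.exp (t/2))^2 := by
    rw [sq, ← Real.exp_add]; ring_nf
  have h2 : t/2 ≤ Real.exp (t/2) := by
    have := Real.add_one_le_exp (t/2); linarith
  rw [h1]
  exact pow_le_pow_left₀ (by linarith) h2 2


lemma exists_avoiding {Ω ι : Type*} [Fintype Ω] [DecidableEq Ω] (s : Finset ι)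
    (p : ι → Ω → Prop) [∀ i ω, Decidable (p i ω)] (t Q : ℕ)
    (hcount : ∀ i ∈ s, ((univ : Finset Ω).filter (p i)).card * t ≤ Q)
    (hlt : s.card * Q < Fintype.card Ω * t) :
    ∃ ω : Ω, ∀ i ∈ s, ¬ p i ω := by
  by_contra h
  push_neg at h
  have hsub : (univ : Finset Ω) ⊆ s.biUnion (fun i => (univ : Finset Ω).filter (p i)) := by
    intro ω _
    obtain ⟨i, hi, hp⟩ := h ω
    exact Finset.mem_biUnion.mpr ⟨i, hi, Finset.mem_filter.mpr ⟨Finset.mem_univ _, hp⟩⟩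
  have hmain : Fintype.card Ω * t ≤ s.card * Q := by
    calc Fintype.card Ω * t = (univ : Finset Ω).card * t := by rw [Finset.card_univ]
      _ ≤ (s.biUnion (fun i => (univ : Finset Ω).filter (p i))).card * t :=
          Nat.mul_le_mul_right _ (Finset.card_le_card hsub)
      _ ≤ (∑ i ∈ s, ((univ : Finset Ω).filter (p i)).card) * t :=
          Nat.mul_le_mul_right _ Finset.card_biUnion_le
      _ = ∑ i ∈ s, ((univ : Finset Ω).filter (p i)).card * t := Finset.sum_mul ..
      _ ≤ ∑ _i ∈ s, Q := Finset.sum_le_sum hcount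
      _ = s.card * Q := by rw [Finset.sum_const, smul_eq_mul]
  omega

lemma claimD {σ : ℝ} (hσ0 : 0 < σ) {n : ℕ} (hn : (10:ℝ)^7 / σ^2 ≤ n) (hn1 : 1 ≤ n) :
    12 * (n:ℝ) ≤ (2:ℝ) ^ (0.01 * σ * n) := by
  rw [Real.rpow_def_of_pos (by norm_num)]
  set t := Real.log 2 * (0.01 * σ * n) with hts
  have hlog : (0.6931471803 : ℝ) < Real.log 2 := Real.log_two_gt_d9
  have hn0 : (0:ℝ) < n := by exact_mod_cast hn1
  have ht : 0 ≤ t := by positivity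
  have h1 := quad_le_exp ht
  have hσ2 : (10:ℝ)^7 ≤ σ^2 * n := by
    rw [div_le_iff₀ (by positivity)] at hn; linarith
  have ht2 : 0.0069 * σ * n ≤ t := by
    rw [hts]; nlinarith
  have : 12 * (n:ℝ) ≤ (t/2)^2 := by nlinarith [sq_nonneg (σ*n)]
  linarith

set_option maxHeartbeats 2000000 in
/-- Existence of weakly (σ,2)-regular functions: for every `0 < σ < 1`, for all sufficiently
large `n` and all `m ≤ 0.99·σ·n`, there is `f : {0,1}^n × {0,1}^n → {0,1}^m` such that,
setting `K = 2^⌈σn⌉`, every rectangle `B1 × B2` with `|B1| = |B2| = K` contains each output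
value `a` at most `2·K·K / 2^m` times. -/
theorem exists_weakly_regular_function (σ : ℝ) (hσ0 : 0 < σ) (hσ1 : σ < 1) :
    ∃ n0 : ℕ, ∀ n : ℕ, n0 ≤ n → ∀ m : ℕ, (m : ℝ) ≤ 0.99 * σ * n →
      ∃ f : (Fin n → Bool) × (Fin n → Bool) → (Fin m → Bool),
        ∀ B1 B2 : Finset (Fin n → Bool),
          B1.card = 2 ^ ⌈σ * n⌉₊ → B2.card = 2 ^ ⌈σ * n⌉₊ →
          ∀ a : Fin m → Bool,
            (2 : ℝ) ^ m * (((B1 ×ˢ B2).filter (fun uv => f uv = a)).card : ℝ) ≤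
              2 * (2 : ℝ) ^ ⌈σ * n⌉₊ * (2 : ℝ) ^ ⌈σ * n⌉₊ := by
  classical
  refine ⟨⌈(10:ℝ)^7 / σ^2⌉₊ + 1, fun n hn m hm => ?_⟩
  have hn1 : 1 ≤ n := le_trans (by omega) hn
  have hnR : (10:ℝ)^7 / σ^2 ≤ n := by
    have h1 : (⌈(10:ℝ)^7 / σ^2⌉₊ : ℝ) ≤ n := by exact_mod_cast Nat.le_of_succ_le hn
    exact le_trans (Nat.le_ceil _) h1
  set k := ⌈σ * n⌉₊ with hkdef
  have hn0R : (0:ℝ) < n := by exact_mod_cast hn1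
  have hσn : σ * n ≤ (k:ℝ) := Nat.le_ceil _
  have hmk : m ≤ k := by
    have : (m:ℝ) ≤ (k:ℝ) := le_trans hm (by nlinarith)
    exact_mod_cast this
  have hm2k : m ≤ 2*k := by omega
  have hkn : k ≤ n := Nat.ceil_le.mpr (by nlinarith)
  have hmn : m ≤ n := by
    have : (m:ℝ) ≤ (n:ℝ) := le_trans hm (by nlinarith)
    exact_mod_cast this
  obtain ⟨f, hf⟩ : ∃ f : (Fin n → Bool) × (Fin n → Bool) → (Fin m → Bool),
      ∀ B1 B2 : Finset (Fin n → Bool), B1.card = 2^k → B2.card = 2^k →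
        ∀ a : Fin m → Bool,
          ((B1 ×ˢ B2).filter (fun uv => f uv = a)).card ≤ 2^(2*k+1-m) := by
    set T : ℕ := 2^(2*k+1-m) + 1 with hT
    set K : ℕ := 2^k with hK
    set trips := ((Finset.powersetCard K (univ : Finset (Fin n → Bool))) ×ˢ
        (Finset.powersetCard K (univ : Finset (Fin n → Bool)))) ×ˢ
        (univ : Finset (Fin m → Bool)) with htrips
    have hAcard : Fintype.card (Fin m → Bool) = 2^m := by simp
    have hPcard : Fintype.card ((Fin n → Bool) × (Fin n → Bool)) = 2^(2*n) := by
      simp [two_mul, pow_add]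
    set N : ℕ := 2^(2*n) with hN
    set Q : ℕ := (2^m + 1)^(2^(2*k)) * (2^m)^(N - 2^(2*k)) with hQ
    have hKK : ∀ x ∈ trips, (x.1.1 ×ˢ x.1.2).card = 2^(2*k) := by
      intro x hx
      simp only [htrips, Finset.mem_product, Finset.mem_powersetCard_univ] at hx
      rw [Finset.card_product, hx.1.1, hx.1.2, hK, ← pow_add, two_mul]
    have hper : ∀ x ∈ trips,
        ((univ : Finset ((Fin n → Bool) × (Fin n → Bool) → Fin m → Bool)).filter
          (fun f => T ≤ ((x.1.1 ×ˢ x.1.2).filter (fun uv => f uv = x.2)).card)).card * 2^T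
          ≤ Q := by
      intro x hx
      have h := card_filter_le_bound (x.1.1 ×ˢ x.1.2) x.2 T
      rwa [hAcard, hPcard, hKK x hx] at h
    have hΩ : Fintype.card ((Fin n → Bool) × (Fin n → Bool) → Fin m → Bool) = (2^m)^N := by
      rw [Fintype.card_fun, hAcard, hPcard]
    have htripcard : trips.card = ((2^n).choose K)^2 * 2^m := by
      rw [htrips, Finset.card_product, Finset.card_product, Finset.card_powersetCard,
        Finset.card_univ, Finset.card_univ]
      simp [sq, mul_assoc]
    have hK2N : 2^(2*k) ≤ N := Nat.pow_le_pow_right (by norm_num) (by omega)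
    set μ : ℕ := 2^(2*k-m) with hμ
    have hTμ : T = 2*μ + 1 := by
      rw [hT, hμ, show 2*k+1-m = (2*k-m)+1 from by omega, pow_succ]; ring
    have hμR : ((μ:ℕ):ℝ) = (2:ℝ)^(2*k-m) := by rw [hμ, Nat.cast_pow, Nat.cast_ofNat]
    have c1 : (((2^n).choose K : ℕ) : ℝ) ≤ (2:ℝ)^(n*K) := by
      have h := Nat.choose_le_pow (2^n) K
      calc (((2^n).choose K : ℕ) : ℝ) ≤ (((2^n)^K : ℕ) : ℝ) := by exact_mod_cast h
        _ = (2:ℝ)^(n*K) := by push_cast [← pow_mul]; norm_num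
    have c2 : ((2:ℝ)^m + 1)^(2^(2*k)) ≤ (2:ℝ)^(m * 2^(2*k)) * Real.exp ((2:ℝ)^(2*k-m)) := by
      have hp : (2:ℝ)^m + 1 = 2^m * (1 + ((2:ℝ)^m)⁻¹) := by
        field_simp
      have hle : (1 + ((2:ℝ)^m)⁻¹) ≤ Real.exp (((2:ℝ)^m)⁻¹) := by
        have := Real.add_one_le_exp (((2:ℝ)^m)⁻¹); linarith
      calc ((2:ℝ)^m + 1)^(2^(2*k)) = ((2:ℝ)^m)^(2^(2*k)) * (1 + ((2:ℝ)^m)⁻¹)^(2^(2*k)) := by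
            rw [hp, mul_pow]
        _ ≤ ((2:ℝ)^m)^(2^(2*k)) * (Real.exp (((2:ℝ)^m)⁻¹))^(2^(2*k)) := by
            gcongr <;> positivity
        _ = (2:ℝ)^(m * 2^(2*k)) * Real.exp ((2^(2*k) : ℕ) * ((2:ℝ)^m)⁻¹) := by
            rw [← pow_mul, ← Real.exp_nat_mul]
        _ = (2:ℝ)^(m * 2^(2*k)) * Real.exp ((2:ℝ)^(2*k-m)) := by
            congr 2
            have h2 : (2:ℝ)^(2*k-m) * (2:ℝ)^m = (2:ℝ)^(2*k) := by
              rw [← pow_add]; congr 1; omega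
            have h2m : (0:ℝ) < (2:ℝ)^m := by positivity
            push_cast
            field_simp
            linarith [h2]
    have c3 : Real.exp ((2:ℝ)^(2*k-m)) ≤ (2:ℝ) ^ ((3/2) * (2:ℝ)^(2*k-m)) := by
      rw [Real.rpow_def_of_pos (by norm_num)]
      apply Real.exp_le_exp.mpr
      have hμ0 : (0:ℝ) ≤ (2:ℝ)^(2*k-m) := by positivity
      nlinarith [Real.log_two_gt_d9]
    have hx := claimD hσ0 hnR hn1
    have hKR : (1:ℝ) ≤ (2:ℝ)^k := one_le_pow₀ (by norm_num)
    have cC : 2*((n:ℝ)*(2:ℝ)^k) + m ≤ (2:ℝ)^(2*k-m) / 2 := by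
      have e1 : (k:ℝ) + 0.01*σ*n ≤ ((2*k - m : ℕ):ℝ) := by
        rw [Nat.cast_sub hm2k]; push_cast; nlinarith
      have e2 : (2:ℝ)^(2*k-m) = (2:ℝ) ^ (((2*k-m:ℕ)):ℝ) := (Real.rpow_natCast _ _).symm
      have e3 : (2:ℝ) ^ ((k:ℝ) + 0.01*σ*n) ≤ (2:ℝ) ^ (((2*k-m:ℕ)):ℝ) :=
        (Real.rpow_le_rpow_left_iff (by norm_num)).mpr e1
      have e4 : (2:ℝ) ^ ((k:ℝ) + 0.01*σ*n) = (2:ℝ)^k * (2:ℝ)^(0.01*σ*n) := by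
        rw [Real.rpow_add (by norm_num), Real.rpow_natCast]
      have e5 : (2:ℝ)^k * (12*(n:ℝ)) ≤ (2:ℝ)^k * (2:ℝ)^(0.01*σ*n) := by
        have h2k : (0:ℝ) < (2:ℝ)^k := by positivity
        nlinarith
      have hmnR : (m:ℝ) ≤ (n:ℝ) := by exact_mod_cast hmn
      have hnK : (n:ℝ) ≤ (n:ℝ)*(2:ℝ)^k := by nlinarith
      nlinarith [e3, e4, e5]
    have hR : (trips.card : ℝ) * (Q:ℝ) < (((2^m)^N : ℕ):ℝ) * ((2^T : ℕ):ℝ) := by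
      have hQR : (Q:ℝ) = ((2:ℝ)^m + 1)^(2^(2*k)) * ((2:ℝ)^m)^(N - 2^(2*k)) := by
        rw [hQ]; push_cast; ring
      have htc : (trips.card : ℝ) ≤ (2:ℝ)^(2*(n*K)+m) := by
        rw [htripcard]
        push_cast
        calc (((2^n).choose K : ℕ):ℝ)^2 * (2:ℝ)^m ≤ ((2:ℝ)^(n*K))^2 * (2:ℝ)^m := by
              gcongr <;> positivity
          _ = (2:ℝ)^(2*(n*K)+m) := by rw [← pow_mul, ← pow_add]; ring_nf
      have hmul : ((2:ℝ)^m)^(N - 2^(2*k)) * (2:ℝ)^(m * 2^(2*k)) = ((2:ℝ)^m)^N := by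
        rw [← pow_mul, ← pow_add, ← pow_mul 2 m N]
        congr 1
        rw [← Nat.mul_add, Nat.sub_add_cancel hK2N]
      have hexpo : (2:ℝ)^(2*(n*K)+m) * (2:ℝ) ^ ((3/2) * (2:ℝ)^(2*k-m)) < ((2^T : ℕ):ℝ) := by
        have hTR : ((2^T : ℕ):ℝ) = (2:ℝ) ^ ((T:ℕ):ℝ) := by
          rw [Real.rpow_natCast]; push_cast; ring
        have hA : (2:ℝ)^(2*(n*K)+m) = (2:ℝ) ^ (((2*(n*K)+m : ℕ)):ℝ) := by
          rw [Real.rpow_natCast]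
        rw [hTR, hA, ← Real.rpow_add (by norm_num)]
        apply Real.rpow_lt_rpow_of_exponent_lt (by norm_num)
        have hTcast : ((T:ℕ):ℝ) = 2*((μ:ℕ):ℝ) + 1 := by rw [hTμ]; push_cast; ring
        rw [hTcast, hμR]
        have hKnat : ((K:ℕ):ℝ) = (2:ℝ)^k := by rw [hK]; push_cast; ring
        push_cast
        nlinarith [cC]
      calc (trips.card : ℝ) * (Q:ℝ)
          ≤ (2:ℝ)^(2*(n*K)+m) * (Q:ℝ) :=
            mul_le_mul_of_nonneg_right htc (Nat.cast_nonneg _)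
        _ ≤ (2:ℝ)^(2*(n*K)+m) *
              (((2:ℝ)^(m * 2^(2*k)) * Real.exp ((2:ℝ)^(2*k-m))) * ((2:ℝ)^m)^(N - 2^(2*k))) := by
            rw [hQR]
            apply mul_le_mul_of_nonneg_left ?_ (by positivity)
            apply mul_le_mul_of_nonneg_right c2 (by positivity)
        _ ≤ (2:ℝ)^(2*(n*K)+m) *
              (((2:ℝ)^(m * 2^(2*k)) * (2:ℝ) ^ ((3/2) * (2:ℝ)^(2*k-m))) *
                ((2:ℝ)^m)^(N - 2^(2*k))) := by
            apply mul_le_mul_of_nonneg_left ?_ (by positivity)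
            apply mul_le_mul_of_nonneg_right ?_ (by positivity)
            apply mul_le_mul_of_nonneg_left c3 (by positivity)
        _ = ((2:ℝ)^(2*(n*K)+m) * (2:ℝ) ^ ((3/2) * (2:ℝ)^(2*k-m))) * ((2:ℝ)^m)^N := by
            rw [← hmul]; ring
        _ < (((2^T : ℕ):ℝ)) * ((2:ℝ)^m)^N :=
            mul_lt_mul_of_pos_right hexpo (by positivity)
        _ = (((2^m)^N : ℕ):ℝ) * ((2^T : ℕ):ℝ) := by push_cast; ring
    have hlt : trips.card * Q < Fintype.card ((Fin n → Bool) × (Fin n → Bool) → Fin m → Bool)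
        * 2^T := by
      rw [hΩ]
      exact_mod_cast hR
    obtain ⟨f, hgood⟩ := exists_avoiding trips
      (fun x (f : (Fin n → Bool) × (Fin n → Bool) → Fin m → Bool) =>
        T ≤ ((x.1.1 ×ˢ x.1.2).filter (fun uv => f uv = x.2)).card) (2^T) Q hper hlt
    refine ⟨f, fun B1 B2 h1 h2 a => ?_⟩
    have hmem : ((B1, B2), a) ∈ trips := by
      simp only [htrips, Finset.mem_product, Finset.mem_powersetCard_univ, Finset.mem_univ,
        and_true]
      exact ⟨h1, h2⟩
    have := hgood ((B1, B2), a) hmem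
    simp only [not_le] at this
    omega
  -- conclude the real statement from the nat-level bound
  refine ⟨f, fun B1 B2 h1 h2 a => ?_⟩
  have hc := hf B1 B2 h1 h2 a
  have hcR : (((B1 ×ˢ B2).filter (fun uv => f uv = a)).card : ℝ) ≤ (2:ℝ)^(2*k+1-m) := by
    exact_mod_cast Nat.cast_le.mpr hc
  calc (2 : ℝ) ^ m * (((B1 ×ˢ B2).filter (fun uv => f uv = a)).card : ℝ)
      ≤ (2:ℝ)^m * (2:ℝ)^(2*k+1-m) := by
        apply mul_le_mul_of_nonneg_left hcR (by positivity)
    _ = (2:ℝ)^(m + (2*k+1-m)) := (pow_add 2 m _).symm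
    _ = 2 * (2 : ℝ) ^ k * (2 : ℝ) ^ k := by
        rw [show m + (2*k+1-m) = k + k + 1 from by omega, pow_succ, pow_add]; ring
end

section
/- For every real σ with 0 < σ < 1 there exists a natural number n0 such that for every n ≥ n0 and every natural number m with m ≤ 0.99 · σ · n, there exists a (σ,2)-regular function f : {0,1}^n × {0,1}^n → {0,1}^m; that is, for all natural numbers k1, k2 with ⌈σn⌉ ≤ k1 ≤ n and ⌈σn⌉ ≤ k2 ≤ n, all sets B1, B2 ⊆ {0,1}^n with |B1| = 2^{k1} and |B2| = 2^{k2}, and every a ∈ {0,1}^m, one has 2^m · |{(u,v) ∈ B1 × B2 : f(u,v) = a}| ≤ 2 · 2^{k1} · 2^{k2}. -/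
/-!
A uniformly random `f` works; we count functions instead of using probabilities. For a fixed
rectangle `S = B₁ × B₂` and value `a`, the number `X` of hits of `a` on `S` is binomial with mean
`λ = #S / 2^m`, and `E[2^X] = (1 + 2^(-m))^#S ≤ e^λ`. By Markov, `X > 2λ` has probability at most
`e^λ / 2^(2λ+1) ≤ 2^(-λ/2) / 2`. There are at most `(n+1)^2 · 2^(n 2^k₁ + n 2^k₂ + m)` pairs of a
rectangle and a value, and `λ/2 = 2^(k₁+k₂-m-1) ≥ 2^(max k₁ k₂) · 2^(σn/100 - 1)` dominates this
exponent once `2^(σn/100) ≥ 16n`, so the union bound leaves a good `f`.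
-/

open Finset

theorem add_one_pow_two_mul_le (q : ℕ) : (q + 1) ^ (2 * q) ≤ 8 * q ^ (2 * q) := by
  rcases q.eq_zero_or_pos with rfl | hq
  · norm_num
  have hq' : (0 : ℝ) < q := by exact_mod_cast hq
  have hexp : ((q : ℝ) + 1) / q ≤ Real.exp (1 / q) := by
    rw [add_div, div_self hq'.ne', add_comm]
    exact Real.add_one_le_exp _
  have he2 : Real.exp 2 ≤ 8 := by
    have := Real.exp_one_lt_d9
    rw [show (2 : ℝ) = 1 + 1 by norm_num, Real.exp_add]
    nlinarith [Real.exp_pos 1]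
  suffices ((q : ℝ) + 1) ^ (2 * q) ≤ 8 * (q : ℝ) ^ (2 * q) by exact_mod_cast this
  rw [← div_le_iff₀ (by positivity), ← div_pow]
  calc (((q : ℝ) + 1) / q) ^ (2 * q) ≤ Real.exp (1 / q) ^ (2 * q) := by gcongr
    _ = Real.exp 2 := by
      rw [← Real.exp_nat_mul]; congr 1; field_simp; push_cast; ring
    _ ≤ 8 := he2

theorem card_filter_lt_mul_pow_le {ι : Type*} (s : Finset ι) (X : ι → ℕ) (t c : ℕ) (hc : 1 ≤ c) :
    #{i ∈ s | t < X i} * c ^ (t + 1) ≤ ∑ i ∈ s, c ^ X i := by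
  rw [← smul_eq_mul]
  calc #{i ∈ s | t < X i} • c ^ (t + 1) ≤ ∑ i ∈ s with t < X i, c ^ X i :=
        card_nsmul_le_sum _ _ _ fun i hi => Nat.pow_le_pow_right hc (mem_filter.mp hi).2
    _ ≤ ∑ i ∈ s, c ^ X i := sum_le_sum_of_subset (filter_subset _ _)

section
variable {α β : Type*} [Fintype α] [DecidableEq α] [Fintype β] [DecidableEq β]

theorem sum_two_pow_card_filter_eq (S : Finset α) (a : β) :
    ∑ f : α → β, 2 ^ #{x ∈ S | f x = a} = (Fintype.card β + 1) ^ #S * Fintype.card β ^ #Sᶜ := by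
  set w : α → β → ℕ := fun x b => if x ∈ S then (if b = a then 2 else 1) else 1
  -- `2 ^ #{x ∈ S | f x = a}` is a product of weights of the values `f x`, so the sum factors.
  have hweight (f : α → β) : 2 ^ #{x ∈ S | f x = a} = ∏ x, w x (f x) := by
    rw [prod_ite_mem, univ_inter, prod_ite, prod_const, prod_const, one_pow, mul_one]
  have hfiber (x : α) :
      ∑ b, w x b = if x ∈ S then Fintype.card β + 1 else Fintype.card β := by
    have hsplit (b : β) : (if b = a then 2 else 1) = 1 + if b = a then 1 else 0 := by
      split_ifs <;> rfl
    by_cases hx : x ∈ S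
    · simp [w, hx, hsplit, sum_add_distrib]
    · simp [w, hx]
  simp_rw [hweight, ← Fintype.prod_sum, hfiber, prod_ite, prod_const]
  simp [filter_not, compl_eq_univ_sdiff]

def overloadedMaps (S : Finset α) (a : β) : Finset (α → β) :=
  {f | 2 * #S < Fintype.card β * #{x ∈ S | f x = a}}

theorem card_overloadedMaps_mul_le [Nonempty β] (S : Finset α) (a : β) (μ : ℕ)
    (hS : #S = 2 * Fintype.card β * μ) :
    #(overloadedMaps S a) * (2 * 2 ^ μ) ≤ Fintype.card β ^ Fintype.card α := by
  set q := Fintype.card β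
  have hq : 0 < q := Fintype.card_pos
  have hthreshold :
      overloadedMaps S a = ({f | 4 * μ < #{x ∈ S | f x = a}} : Finset (α → β)) := by
    refine filter_congr fun f _ => ?_
    rw [hS, show 2 * (2 * q * μ) = q * (4 * μ) by ring]
    exact Nat.mul_lt_mul_left hq
  have hratio : (q + 1) ^ #S ≤ 8 ^ μ * q ^ #S := by
    rw [hS, pow_mul (q + 1), pow_mul q, ← mul_pow]
    exact Nat.pow_le_pow_left (add_one_pow_two_mul_le q) μ
  have hmarkov := card_filter_lt_mul_pow_le univ (fun f : α → β => #{x ∈ S | f x = a}) (4 * μ) 2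
    one_le_two
  rw [sum_two_pow_card_filter_eq, ← hthreshold] at hmarkov
  refine Nat.le_of_mul_le_mul_left ?_ (pow_pos (by norm_num : 0 < 8) μ)
  calc 8 ^ μ * (#(overloadedMaps S a) * (2 * 2 ^ μ))
      = #(overloadedMaps S a) * 2 ^ (4 * μ + 1) := by
        rw [pow_succ, pow_mul, show (2 : ℕ) ^ 4 = 2 * 8 by norm_num, mul_pow]; ring
    _ ≤ (q + 1) ^ #S * q ^ #Sᶜ := hmarkov
    _ ≤ 8 ^ μ * q ^ #S * q ^ #Sᶜ := by gcongr
    _ = 8 ^ μ * q ^ Fintype.card α := by rw [mul_assoc, ← pow_add, card_add_card_compl]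

end

theorem succ_sq_mul_pow_le_two_pow_two_pow {n m K k₁ k₂ : ℕ} (hmK : m + 1 ≤ K) (hK₁ : K ≤ k₁)
    (hK₂ : K ≤ k₂) (hmn : m ≤ n) (hK : 8 * n ≤ 2 ^ (K - (m + 1))) :
    (n + 1) ^ 2 * ((2 ^ n) ^ 2 ^ k₁ * (2 ^ n) ^ 2 ^ k₂ * 2 ^ m) ≤ 2 ^ 2 ^ (k₁ + k₂ - (m + 1)) := by
  set e := k₁ + k₂ - K
  have hsplit : 2 ^ (k₁ + k₂ - (m + 1)) = 2 ^ (K - (m + 1)) * 2 ^ e := by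
    rw [← pow_add]; congr 1; omega
  have h₁ : 2 ^ k₁ ≤ 2 ^ e := Nat.pow_le_pow_right two_pos (by omega)
  have h₂ : 2 ^ k₂ ≤ 2 ^ e := Nat.pow_le_pow_right two_pos (by omega)
  have hexp : 2 * n + n * 2 ^ k₁ + n * 2 ^ k₂ + m ≤ 2 ^ (k₁ + k₂ - (m + 1)) := by
    rw [hsplit]
    nlinarith [Nat.one_le_two_pow (n := e)]
  have hsucc : (n + 1) ^ 2 ≤ 2 ^ (2 * n) := by
    rw [pow_mul']
    exact Nat.pow_le_pow_left Nat.lt_two_pow_self 2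
  calc (n + 1) ^ 2 * ((2 ^ n) ^ 2 ^ k₁ * (2 ^ n) ^ 2 ^ k₂ * 2 ^ m)
      ≤ 2 ^ (2 * n) * ((2 ^ n) ^ 2 ^ k₁ * (2 ^ n) ^ 2 ^ k₂ * 2 ^ m) := by gcongr
    _ = 2 ^ (2 * n + n * 2 ^ k₁ + n * 2 ^ k₂ + m) := by simp only [← pow_mul, ← pow_add]; ring_nf
    _ ≤ 2 ^ 2 ^ (k₁ + k₂ - (m + 1)) := Nat.pow_le_pow_right two_pos hexp

theorem exists_forall_notMem_of_sum_card_lt {ι Ω : Type*} [Fintype Ω] [DecidableEq Ω]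
    (s : Finset ι) (E : ι → Finset Ω) (h : ∑ i ∈ s, #(E i) < Fintype.card Ω) :
    ∃ ω, ∀ i ∈ s, ω ∉ E i := by
  by_contra! hcover
  have hsub : (univ : Finset Ω) ⊆ s.biUnion E := fun ω _ => mem_biUnion.mpr (hcover ω)
  exact ((card_le_card hsub).trans card_biUnion_le).not_gt (by simpa using h)

section
variable {X β : Type*} [Fintype X] [DecidableEq X] [Fintype β] [DecidableEq β] {n m K : ℕ}

variable (X β) in
def rectangleValuePairs (k₁ k₂ : ℕ) : Finset ((Finset X × Finset X) × β) :=
  (powersetCard (2 ^ k₁) univ ×ˢ powersetCard (2 ^ k₂) univ) ×ˢ univ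

theorem sum_card_overloadedMaps_mul_le (hX : Fintype.card X = 2 ^ n)
    (hβ : Fintype.card β = 2 ^ m) (hmK : m + 1 ≤ K) (hmn : m ≤ n) (hK : 8 * n ≤ 2 ^ (K - (m + 1)))
    {k₁ k₂ : ℕ} (hK₁ : K ≤ k₁) (hK₂ : K ≤ k₂) :
    (∑ p ∈ rectangleValuePairs X β k₁ k₂, #(overloadedMaps (p.1.1 ×ˢ p.1.2) p.2)) *
      (2 * (n + 1) ^ 2) ≤ Fintype.card β ^ Fintype.card (X × X) := by
  set T := Fintype.card β ^ Fintype.card (X × X)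
  set μ := 2 ^ (k₁ + k₂ - (m + 1))
  have : Nonempty β := Fintype.card_pos_iff.mp (by simp [hβ])
  have hrect : ∀ p ∈ rectangleValuePairs X β k₁ k₂,
      #(overloadedMaps (p.1.1 ×ˢ p.1.2) p.2) * (2 * 2 ^ μ) ≤ T := by
    simp only [rectangleValuePairs, mem_product, mem_powersetCard_univ]
    rintro ⟨⟨B₁, B₂⟩, a⟩ ⟨⟨hB₁, hB₂⟩, -⟩
    refine card_overloadedMaps_mul_le _ a μ ?_
    rw [card_product, hB₁, hB₂, hβ, ← pow_add, ← pow_succ', ← pow_add]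
    congr 1; omega
  have hcount : #(rectangleValuePairs X β k₁ k₂) * (n + 1) ^ 2 ≤ 2 ^ μ := by
    refine le_trans ?_ (succ_sq_mul_pow_le_two_pow_two_pow hmK hK₁ hK₂ hmn hK)
    rw [mul_comm]
    simp only [rectangleValuePairs, card_product, card_powersetCard, card_univ, hX, hβ]
    gcongr <;> exact Nat.choose_le_pow _ _
  have hsum : (∑ p ∈ rectangleValuePairs X β k₁ k₂, #(overloadedMaps (p.1.1 ×ˢ p.1.2) p.2)) *
      (2 * 2 ^ μ) ≤ #(rectangleValuePairs X β k₁ k₂) * T := by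
    rw [sum_mul, ← smul_eq_mul]
    exact sum_le_card_nsmul _ _ _ hrect
  refine Nat.le_of_mul_le_mul_right ?_ (pow_pos two_pos μ)
  calc _ = (∑ p ∈ rectangleValuePairs X β k₁ k₂, #(overloadedMaps (p.1.1 ×ˢ p.1.2) p.2)) *
        (2 * 2 ^ μ) * (n + 1) ^ 2 := by ring
    _ ≤ #(rectangleValuePairs X β k₁ k₂) * T * (n + 1) ^ 2 := by gcongr
    _ = #(rectangleValuePairs X β k₁ k₂) * (n + 1) ^ 2 * T := by ring
    _ ≤ 2 ^ μ * T := by gcongr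
    _ = T * 2 ^ μ := mul_comm _ _

theorem sum_sum_card_overloadedMaps_lt (hX : Fintype.card X = 2 ^ n)
    (hβ : Fintype.card β = 2 ^ m) (hmK : m + 1 ≤ K) (hK : 8 * n ≤ 2 ^ (K - (m + 1))) :
    ∑ k ∈ Icc K n ×ˢ Icc K n, ∑ p ∈ rectangleValuePairs X β k.1 k.2,
      #(overloadedMaps (p.1.1 ×ˢ p.1.2) p.2) < Fintype.card β ^ Fintype.card (X × X) := by
  set T := Fintype.card β ^ Fintype.card (X × X)
  have hT : 0 < T := pow_pos (by simp [hβ]) _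
  have hgroup : ∀ k ∈ Icc K n ×ˢ Icc K n, (∑ p ∈ rectangleValuePairs X β k.1 k.2,
      #(overloadedMaps (p.1.1 ×ˢ p.1.2) p.2)) * (2 * (n + 1) ^ 2) ≤ T := by
    simp only [mem_product, mem_Icc]
    rintro ⟨k₁, k₂⟩ ⟨⟨hK₁, hk₁⟩, hK₂, -⟩
    exact sum_card_overloadedMaps_mul_le hX hβ hmK (by omega) hK hK₁ hK₂
  have hpairs : #(Icc K n ×ˢ Icc K n) ≤ (n + 1) ^ 2 := by
    rw [card_product, Nat.card_Icc, sq]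
    gcongr <;> omega
  have hsum : (∑ k ∈ Icc K n ×ˢ Icc K n, ∑ p ∈ rectangleValuePairs X β k.1 k.2,
      #(overloadedMaps (p.1.1 ×ˢ p.1.2) p.2)) * 2 * (n + 1) ^ 2 ≤ T * (n + 1) ^ 2 := by
    calc _ = (∑ k ∈ Icc K n ×ˢ Icc K n, ∑ p ∈ rectangleValuePairs X β k.1 k.2,
          #(overloadedMaps (p.1.1 ×ˢ p.1.2) p.2)) * (2 * (n + 1) ^ 2) := by ring
      _ ≤ #(Icc K n ×ˢ Icc K n) * T := by
        rw [sum_mul, ← smul_eq_mul]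
        exact sum_le_card_nsmul _ _ _ hgroup
      _ ≤ (n + 1) ^ 2 * T := by gcongr
      _ = T * (n + 1) ^ 2 := mul_comm _ _
  have := Nat.le_of_mul_le_mul_right hsum (by positivity)
  omega
end

theorem eventually_mul_le_two_rpow {c : ℝ} (hc : 0 < c) (A : ℝ) :
    ∀ᶠ n : ℕ in Filter.atTop, A * n ≤ (2 : ℝ) ^ (c * n) := by
  have hr : 1 < (2 : ℝ) ^ c := Real.one_lt_rpow one_lt_two hc
  filter_upwards [((isLittleO_coe_const_pow_of_one_lt (R := ℝ) hr).const_mul_left A).bound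
    one_pos] with n hn
  rw [Real.rpow_mul zero_le_two, Real.rpow_natCast]
  simpa [abs_of_pos (by positivity : (0:ℝ) < (2:ℝ) ^ c)] using (le_abs_self _).trans hn

theorem eventually_lt_ceil_and_le_two_pow {σ : ℝ} (hσ : 0 < σ) :
    ∀ᶠ n : ℕ in Filter.atTop, ∀ m : ℕ, (m : ℝ) ≤ 0.99 * σ * n →
      m < ⌈σ * n⌉₊ ∧ 8 * n ≤ 2 ^ (⌈σ * n⌉₊ - (m + 1)) := by
  filter_upwards [eventually_mul_le_two_rpow (by positivity : 0 < 0.01 * σ) 16,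
    Filter.eventually_gt_atTop 0] with n hgrowth hn m hm
  have hn' : (0 : ℝ) < n := by exact_mod_cast hn
  have hmK : m < ⌈σ * n⌉₊ := Nat.lt_ceil.mpr (by nlinarith)
  refine ⟨hmK, ?_⟩
  have hgap : 0.01 * σ * n - 1 ≤ ((⌈σ * n⌉₊ - (m + 1) : ℕ) : ℝ) := by
    push_cast [Nat.cast_sub hmK]
    linarith [Nat.le_ceil (σ * n)]
  have : (8 : ℝ) * n ≤ 2 ^ (⌈σ * n⌉₊ - (m + 1)) := by
    rw [← Real.rpow_natCast]
    refine le_trans ?_ (Real.rpow_le_rpow_of_exponent_le one_le_two hgap)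
    rw [Real.rpow_sub two_pos, Real.rpow_one]
    linarith
  exact_mod_cast this

theorem exists_regular_function_general (σ : ℝ) (hσ0 : 0 < σ) :
    ∃ n0 : ℕ, ∀ n : ℕ, n0 ≤ n → ∀ m : ℕ, (m : ℝ) ≤ 0.99 * σ * n →
      ∃ f : (Fin n → Bool) × (Fin n → Bool) → (Fin m → Bool),
        ∀ k1 k2 : ℕ, ⌈σ * n⌉₊ ≤ k1 → k1 ≤ n → ⌈σ * n⌉₊ ≤ k2 → k2 ≤ n →
          ∀ B1 B2 : Finset (Fin n → Bool), B1.card = 2 ^ k1 → B2.card = 2 ^ k2 →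
            ∀ a : Fin m → Bool,
              (2 : ℝ) ^ m * (((B1 ×ˢ B2).filter (fun uv => f uv = a)).card : ℝ) ≤
                2 * (2 : ℝ) ^ k1 * (2 : ℝ) ^ k2 := by
  obtain ⟨n₀, hn₀⟩ := Filter.eventually_atTop.mp (eventually_lt_ceil_and_le_two_pow hσ0)
  refine ⟨n₀, fun n hn m hm => ?_⟩
  obtain ⟨hmK, hK⟩ := hn₀ n hn m hm
  obtain ⟨f, hf⟩ := exists_forall_notMem_of_sum_card_lt
    ((Icc ⌈σ * n⌉₊ n ×ˢ Icc ⌈σ * n⌉₊ n).sigma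
      fun k => rectangleValuePairs (Fin n → Bool) (Fin m → Bool) k.1 k.2)
    (fun i => overloadedMaps (i.2.1.1 ×ˢ i.2.1.2) i.2.2)
    (by
      rw [sum_sigma, Fintype.card_fun]
      exact sum_sum_card_overloadedMaps_lt (by simp) (by simp) hmK hK)
  refine ⟨f, fun k₁ k₂ hK₁ hk₁ hK₂ hk₂ B₁ B₂ hB₁ hB₂ a => ?_⟩
  have hgood := hf ⟨(k₁, k₂), ((B₁, B₂), a)⟩ (by
    simp [mem_sigma, rectangleValuePairs, hK₁, hk₁, hK₂, hk₂, hB₁, hB₂])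
  simp only [overloadedMaps, mem_filter, mem_univ, true_and, not_lt, card_product, hB₁, hB₂,
    Fintype.card_fun, Fintype.card_bool, Fintype.card_fin, ← mul_assoc] at hgood
  exact_mod_cast hgood

/-- Existence of (σ,2)-regular functions: for every `0 < σ < 1`, for all sufficiently large
`n` and all `m ≤ 0.99·σ·n`, there is `f : {0,1}^n × {0,1}^n → {0,1}^m` such that for all
`⌈σn⌉ ≤ k1 ≤ n`, `⌈σn⌉ ≤ k2 ≤ n`, every rectangle `B1 × B2` with `|B1| = 2^{k1}`,
`|B2| = 2^{k2}` contains each output value `a` at most `(2/2^m)·2^{k1}·2^{k2}` times. -/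
theorem exists_regular_function (σ : ℝ) (hσ0 : 0 < σ) (hσ1 : σ < 1) :
    ∃ n0 : ℕ, ∀ n : ℕ, n0 ≤ n → ∀ m : ℕ, (m : ℝ) ≤ 0.99 * σ * n →
      ∃ f : (Fin n → Bool) × (Fin n → Bool) → (Fin m → Bool),
        ∀ k1 k2 : ℕ, ⌈σ * n⌉₊ ≤ k1 → k1 ≤ n → ⌈σ * n⌉₊ ≤ k2 → k2 ≤ n →
          ∀ B1 B2 : Finset (Fin n → Bool), B1.card = 2 ^ k1 → B2.card = 2 ^ k2 →
            ∀ a : Fin m → Bool,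
              (2 : ℝ) ^ m * (((B1 ×ˢ B2).filter (fun uv => f uv = a)).card : ℝ) ≤
                2 * (2 : ℝ) ^ k1 * (2 : ℝ) ^ k2 :=
  exists_regular_function_general σ hσ0
end

section
/- Let n, m, s, t1, t2 be natural numbers with s ≤ t1 < n and s ≤ t2 < n, and let ε be a real number with 0 < ε < 1. Let E : {0,1}^n × {0,1}^n → {0,1}^m be a function such that for all natural numbers k1, k2 with s ≤ k1 ≤ n and s ≤ k2 ≤ n, all sets B1, B2 ⊆ {0,1}^n with |B1| = 2^{k1} and |B2| = 2^{k2}, and every a ∈ {0,1}^m, one has 2^m · |{(u,v) ∈ B1 × B2 : E(u,v) = a}| ≤ 2 · 2^{k1} · 2^{k2}. Then for every set A ⊆ {0,1}^m with |A| ≤ 2^{(1−ε)m} and all sets B1, B2 ⊆ {0,1}^n with |B1| ≤ 2^{t1+1} and |B2| ≤ 2^{t2+1}, one has |{(u,v) ∈ B1 × B2 : E(u,v) ∈ A}| ≤ 2^{t1 + t2 + 3 − εm}, where both exponential bounds are interpreted as real powers of 2. -/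
/-- Counting core of the main argument: if `E : {0,1}^n × {0,1}^n → {0,1}^m` is regular on
rectangles with side sizes `2^{k}` for `s ≤ k ≤ n`, then for every small set
`A ⊆ {0,1}^m` with `|A| ≤ 2^{(1−ε)m}` and all `B1, B2` with `|B1| ≤ 2^{t1+1}`,
`|B2| ≤ 2^{t2+1}`, the number of pairs in `B1 × B2` mapped into `A` is at most
`2^{t1+t2+3−εm}`. -/
theorem preimage_of_small_set_is_small
    (n m s t1 t2 : ℕ) (hs1 : s ≤ t1) (ht1 : t1 < n) (hs2 : s ≤ t2) (ht2 : t2 < n)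
    (ε : ℝ) (hε0 : 0 < ε) (hε1 : ε < 1)
    (E : (Fin n → Bool) × (Fin n → Bool) → (Fin m → Bool))
    (hreg : ∀ k1 k2 : ℕ, s ≤ k1 → k1 ≤ n → s ≤ k2 → k2 ≤ n →
      ∀ B1 B2 : Finset (Fin n → Bool), B1.card = 2 ^ k1 → B2.card = 2 ^ k2 →
        ∀ a : Fin m → Bool,
          (2 : ℝ) ^ m * (((B1 ×ˢ B2).filter (fun uv => E uv = a)).card : ℝ) ≤
            2 * (2 : ℝ) ^ k1 * (2 : ℝ) ^ k2) :
    ∀ A : Finset (Fin m → Bool), (A.card : ℝ) ≤ (2 : ℝ) ^ ((1 - ε) * m) →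
      ∀ B1 B2 : Finset (Fin n → Bool),
        (B1.card : ℝ) ≤ 2 ^ (t1 + 1) → (B2.card : ℝ) ≤ 2 ^ (t2 + 1) →
        (((B1 ×ˢ B2).filter (fun uv => E uv ∈ A)).card : ℝ) ≤
          (2 : ℝ) ^ ((t1 : ℝ) + t2 + 3 - ε * m) := by
  intro A hA B1 B2 hB1 hB2
  have hB1n : B1.card ≤ 2 ^ (t1 + 1) := by exact_mod_cast hB1
  have hB2n : B2.card ≤ 2 ^ (t2 + 1) := by exact_mod_cast hB2
  have hcard : Fintype.card (Fin n → Bool) = 2 ^ n := by simp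
  have h1n : 2 ^ (t1 + 1) ≤ Fintype.card (Fin n → Bool) := by
    rw [hcard]; exact Nat.pow_le_pow_right (by norm_num) ht1
  have h2n : 2 ^ (t2 + 1) ≤ Fintype.card (Fin n → Bool) := by
    rw [hcard]; exact Nat.pow_le_pow_right (by norm_num) ht2
  obtain ⟨C1, hC1sub, hC1card⟩ := Finset.exists_superset_card_eq hB1n h1n
  obtain ⟨C2, hC2sub, hC2card⟩ := Finset.exists_superset_card_eq hB2n h2n
  -- monotonicity
  have hmono : (((B1 ×ˢ B2).filter (fun uv => E uv ∈ A)).card : ℝ) ≤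
      (((C1 ×ˢ C2).filter (fun uv => E uv ∈ A)).card : ℝ) := by
    exact_mod_cast Finset.card_le_card
      (Finset.filter_subset_filter _ (Finset.product_subset_product hC1sub hC2sub))
  -- decompose over A
  have hsplit : ((C1 ×ˢ C2).filter (fun uv => E uv ∈ A)) =
      A.biUnion (fun a => (C1 ×ˢ C2).filter (fun uv => E uv = a)) := by
    ext uv
    simp only [Finset.mem_filter, Finset.mem_biUnion]
    constructor
    · rintro ⟨h1, h2⟩; exact ⟨E uv, h2, h1, rfl⟩
    · rintro ⟨a, ha, h1, h2⟩; exact ⟨h1, h2 ▸ ha⟩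
  have hdisj : ∀ a ∈ A, ∀ b ∈ A, a ≠ b →
      Disjoint ((C1 ×ˢ C2).filter (fun uv => E uv = a))
        ((C1 ×ˢ C2).filter (fun uv => E uv = b)) := by
    intro a _ b _ hab
    simp only [Finset.disjoint_left, Finset.mem_filter]
    rintro x ⟨_, hx⟩ ⟨_, hy⟩
    exact hab (hx ▸ hy)
  have hcardsum : (((C1 ×ˢ C2).filter (fun uv => E uv ∈ A)).card : ℝ) =
      ∑ a ∈ A, (((C1 ×ˢ C2).filter (fun uv => E uv = a)).card : ℝ) := by
    rw [hsplit, Finset.card_biUnion hdisj]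
    push_cast; ring
  have hterm : ∀ a ∈ A, (((C1 ×ˢ C2).filter (fun uv => E uv = a)).card : ℝ) ≤
      2 * (2 : ℝ) ^ (t1 + 1) * (2 : ℝ) ^ (t2 + 1) / (2 : ℝ) ^ m := by
    intro a _
    have h := hreg (t1 + 1) (t2 + 1) (by omega) (by omega) (by omega) (by omega)
      C1 C2 hC1card hC2card a
    rw [le_div_iff₀ (by positivity)]
    linarith [h]
  have hsum : (((C1 ×ˢ C2).filter (fun uv => E uv ∈ A)).card : ℝ) ≤
      (A.card : ℝ) * (2 * (2 : ℝ) ^ (t1 + 1) * (2 : ℝ) ^ (t2 + 1) / (2 : ℝ) ^ m) := by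
    rw [hcardsum]
    calc ∑ a ∈ A, (((C1 ×ˢ C2).filter (fun uv => E uv = a)).card : ℝ)
        ≤ ∑ _a ∈ A, (2 * (2 : ℝ) ^ (t1 + 1) * (2 : ℝ) ^ (t2 + 1) / (2 : ℝ) ^ m) :=
          Finset.sum_le_sum hterm
      _ = (A.card : ℝ) * (2 * (2 : ℝ) ^ (t1 + 1) * (2 : ℝ) ^ (t2 + 1) / (2 : ℝ) ^ m) := by
          rw [Finset.sum_const, nsmul_eq_mul]
  have hfinal : (A.card : ℝ) * (2 * (2 : ℝ) ^ (t1 + 1) * (2 : ℝ) ^ (t2 + 1) / (2 : ℝ) ^ m)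
      ≤ (2 : ℝ) ^ ((t1 : ℝ) + t2 + 3 - ε * m) := by
    have hpos : (0 : ℝ) < 2 * (2 : ℝ) ^ (t1 + 1) * (2 : ℝ) ^ (t2 + 1) / (2 : ℝ) ^ m := by
      positivity
    have h1 : (A.card : ℝ) * (2 * (2 : ℝ) ^ (t1 + 1) * (2 : ℝ) ^ (t2 + 1) / (2 : ℝ) ^ m)
        ≤ (2 : ℝ) ^ ((1 - ε) * m) * (2 * (2 : ℝ) ^ (t1 + 1) * (2 : ℝ) ^ (t2 + 1) / (2 : ℝ) ^ m) := by
      apply mul_le_mul_of_nonneg_right hA (le_of_lt hpos)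
    refine h1.trans (le_of_eq ?_)
    have hn : (2 : ℝ) * 2 ^ (t1 + 1) * 2 ^ (t2 + 1) = 2 ^ (t1 + t2 + 3) := by
      rw [mul_assoc, ← pow_add, ← pow_succ']
      congr 1; omega
    rw [hn, ← Real.rpow_natCast 2 (t1 + t2 + 3), ← Real.rpow_natCast 2 m,
      div_eq_mul_inv, ← Real.rpow_neg (by norm_num), ← Real.rpow_add (by norm_num),
      ← Real.rpow_add (by norm_num)]
    congr 1
    push_cast
    ring
  calc (((B1 ×ˢ B2).filter (fun uv => E uv ∈ A)).card : ℝ)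
      ≤ (((C1 ×ˢ C2).filter (fun uv => E uv ∈ A)).card : ℝ) := hmono
    _ ≤ _ := hsum
    _ ≤ _ := hfinal
end
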